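/- Let A be an almost Kähler–Poisson algebra with curvature tensor R and bilinear form (X,Y) = X^i Y_i. Then for all X, Y, Z, V ∈ X(A): R(X,Y,Z,V) = −R(X,Y,V,Z) = −R(Y,X,Z,V) and R(X,Y,Z,V) = R(Z,V,X,Y), where R(X,Y,Z,V) = (R(Z,V)Y, X). -/

import Mathlib

open scoped BigOperators

namespace KPA

/-- The field of fractions of the polynomial ring `ℂ[x¹,…,xᵐ]`. -/
abbrev A (m : ℕ) := FractionRing (MvPolynomial (Fin m) ℂ)

/-- The generators `x^i` of `A m`. -/
noncomputable def Xg {m : ℕ} (i : Fin m) : A m :=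
  algebraMap (MvPolynomial (Fin m) ℂ) (A m) (MvPolynomial.X i)

/-- The image of a complex constant in `A m`. -/
noncomputable def cC {m : ℕ} (z : ℂ) : A m :=
  algebraMap (MvPolynomial (Fin m) ℂ) (A m) (MvPolynomial.C z)

/-- An almost Kähler–Poisson algebra: the field of fractions `A m` of `ℂ[x¹,…,xᵐ]`,
equipped with a ∗-structure `st` fixing the generators, a Poisson bracket `br`
compatible with ∗, and an invertible hermitian element `γ2` such that
`P^i_k P^k_l P^l_j = -γ² P^i_j` where `P^{ij} = {x^i, x^j}`. -/
structure AKP (m : ℕ) where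
  br : A m → A m → A m
  st : A m → A m
  br_add_left : ∀ a b c, br (a + b) c = br a c + br b c
  br_antisymm : ∀ a b, br a b = - br b a
  br_leibniz : ∀ a b c, br a (b * c) = br a b * c + b * br a c
  br_jacobi : ∀ a b c, br a (br b c) + br b (br c a) + br c (br a b) = 0
  br_const : ∀ (z : ℂ) (a : A m), br (cC z) a = 0
  st_add : ∀ a b, st (a + b) = st a + st b
  st_mul : ∀ a b, st (a * b) = st a * st b
  st_invol : ∀ a, st (st a) = a
  st_const : ∀ z : ℂ, st (cC z) = cC (starRingEnd ℂ z)
  st_x : ∀ i, st (Xg i) = Xg i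
  st_br : ∀ a b, st (br a b) = br (st a) (st b)
  γ2 : A m
  γ2_ne : γ2 ≠ 0
  γ2_herm : st γ2 = γ2
  akp : ∀ i j, (∑ k, ∑ l, br (Xg i) (Xg k) * br (Xg k) (Xg l) * br (Xg l) (Xg j))
      = - γ2 * br (Xg i) (Xg j)

namespace AKP

variable {m : ℕ} (S : AKP m)

/-- `P^{ij} = {x^i, x^j}`. -/
noncomputable def P (i j : Fin m) : A m := S.br (Xg i) (Xg j)

/-- `D^i(u) = γ^{-2} {u, x^k} P^i_k`. -/
noncomputable def D (u : A m) (i : Fin m) : A m := S.γ2⁻¹ * ∑ k, S.br u (Xg k) * S.P i k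

/-- `D^{ik} = D^i(x^k)`. -/
noncomputable def Dm (i k : Fin m) : A m := S.D (Xg k) i

/-- Membership in the tangent space `X(A) = {D(X) : X ∈ Der(A)}` (in components). -/
def tang (T : Fin m → A m) : Prop := ∃ V : Fin m → A m, ∀ i, T i = ∑ k, S.Dm i k * V k

/-- The tangent space `X(A)` as a submodule of `A^m` : the range of the projection `D`. -/
noncomputable def tSp : Submodule (A m) (Fin m → A m) :=
  LinearMap.range (Matrix.mulVecLin (Matrix.of fun i k => S.Dm i k))

/-- Action `X(u) = X^i D_i(u)` of a tangent vector on an element. -/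
noncomputable def act (X : Fin m → A m) (u : A m) : A m := ∑ i, X i * S.D u i

/-- The covariant derivative `∇_X Y = D^{ik} X^l D_l(Y_k) ∂_i` (in components). -/
noncomputable def nab (X Y : Fin m → A m) (i : Fin m) : A m :=
  ∑ k, S.Dm i k * ∑ l, X l * S.D (Y k) l

/-- The commutator `[X,Y]^i = X(Y^i) - Y(X^i)`. -/
noncomputable def lie (X Y : Fin m → A m) (i : Fin m) : A m := S.act X (Y i) - S.act Y (X i)

/-- The curvature `R(X,Y)Z = ∇_X ∇_Y Z - ∇_Y ∇_X Z - ∇_{[X,Y]} Z`. -/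
noncomputable def curv (X Y Z : Fin m → A m) (i : Fin m) : A m :=
  S.nab X (S.nab Y Z) i - S.nab Y (S.nab X Z) i - S.nab (S.lie X Y) Z i

/-- The bilinear form `(X,Y) = X^i Y_i`. -/
noncomputable def ipa (_S : AKP m) (X Y : Fin m → A m) : A m := ∑ i, X i * Y i

/-- `R(X,Y,Z,V) = (R(Z,V)Y, X)`. -/
noncomputable def Rq (X Y Z V : Fin m → A m) : A m := S.ipa (S.curv Z V Y) X

/-- `(∇_X R)(Y,Z,V)`, the covariant derivative of the curvature tensor. -/
noncomputable def nabR (X Y Z V : Fin m → A m) (i : Fin m) : A m :=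
  S.nab X (S.curv Y Z V) i - S.curv (S.nab X Y) Z V i
    - S.curv Y (S.nab X Z) V i - S.curv Y Z (S.nab X V) i

/-- `Π^{ij} = δ^{ij} - D^{ij}`. -/
noncomputable def Pim (i j : Fin m) : A m := (if i = j then 1 else 0) - S.Dm i j

/-- The positivity preorder: `a ≥ 0` iff `a = (∑ uᵢ* uᵢ)/(∑ vₖ* vₖ)`. -/
def pos (a : A m) : Prop :=
  ∃ (N N' : ℕ) (u : Fin N → A m) (v : Fin N' → A m),
    a = (∑ i, S.st (u i) * u i) / (∑ k, S.st (v k) * v k)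

end AKP
end KPA

/-
The matrix `D^{ik} = γ^{-2} P^{kl} P^{il}` is symmetric, and `P³ = -γ² P` makes it fix every
Hamiltonian vector `{v, x^·}`; as every element of `X(A)` is an `A`-combination of the
Hamiltonian vectors of the generators, `D` is the orthogonal projection onto `X(A)`. A derivation
of `A` vanishing on `ℂ` is determined by its values on the generators, which gives `X(x^a) = X^a`
and `[X,Y](u) = X(Y(u)) - Y(X(u))` on `X(A)`; together with `[ham u, ham v] = ham {u,v}` (Jacobi)
this shows that `X(A)` is closed under the bracket. Hence `∇` is torsion free and metric on
`X(A)`, and the symmetries follow as in Riemannian geometry: metricity makes `R(Z,V)`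
skew-adjoint, torsion-freeness and Jacobi give the first Bianchi identity, and four Bianchi
identities combine into the pair symmetry.
-/

open Matrix

namespace KPA

structure IsDerivation {m : ℕ} (δ : A m → A m) : Prop where
  map_add : ∀ a b, δ (a + b) = δ a + δ b
  leibniz : ∀ a b, δ (a * b) = δ a * b + a * δ b
  map_cC : ∀ z : ℂ, δ (cC z) = 0

namespace IsDerivation

variable {m : ℕ} {δ δ' : A m → A m}

noncomputable def toAddMonoidHom (h : IsDerivation δ) : A m →+ A m :=
  AddMonoidHom.mk' δ h.map_add

theorem map_zero (h : IsDerivation δ) : δ 0 = 0 := h.toAddMonoidHom.map_zero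

theorem map_neg (h : IsDerivation δ) (a : A m) : δ (-a) = -δ a := h.toAddMonoidHom.map_neg a

theorem map_sub (h : IsDerivation δ) (a b : A m) : δ (a - b) = δ a - δ b :=
  h.toAddMonoidHom.map_sub a b

theorem map_sum (h : IsDerivation δ) {ι : Type*} (s : Finset ι) (f : ι → A m) :
    δ (∑ i ∈ s, f i) = ∑ i ∈ s, δ (f i) :=
  _root_.map_sum h.toAddMonoidHom f s

theorem map_algebraMap_eq_zero (h : IsDerivation δ) (hX : ∀ i, δ (Xg i) = 0)
    (p : MvPolynomial (Fin m) ℂ) : δ (algebraMap _ (A m) p) = 0 := by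
  induction p using MvPolynomial.induction_on with
  | C z => exact h.map_cC z
  | add p q hp hq => rw [_root_.map_add, h.map_add, hp, hq, add_zero]
  | mul_X p i hp => rw [_root_.map_mul, h.leibniz, hp, ← Xg, hX, zero_mul, mul_zero, add_zero]

theorem eq_zero_of_map_Xg (h : IsDerivation δ) (hX : ∀ i, δ (Xg i) = 0) (a : A m) : δ a = 0 := by
  obtain ⟨⟨p, q⟩, hpq⟩ := IsLocalization.surj (nonZeroDivisors (MvPolynomial (Fin m) ℂ)) a
  have hq : algebraMap (MvPolynomial (Fin m) ℂ) (A m) q ≠ 0 :=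
    IsFractionRing.to_map_ne_zero_of_mem_nonZeroDivisors q.2
  have hδ := h.leibniz a (algebraMap (MvPolynomial (Fin m) ℂ) (A m) q)
  rw [hpq, h.map_algebraMap_eq_zero hX, h.map_algebraMap_eq_zero hX, mul_zero, add_zero] at hδ
  exact (mul_eq_zero.mp hδ.symm).resolve_right hq

theorem sub (h : IsDerivation δ) (h' : IsDerivation δ') : IsDerivation fun a => δ a - δ' a where
  map_add a b := by rw [h.map_add, h'.map_add]; ring
  leibniz a b := by rw [h.leibniz, h'.leibniz]; ring
  map_cC z := by rw [h.map_cC, h'.map_cC, sub_zero]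

theorem ext (h : IsDerivation δ) (h' : IsDerivation δ') (hX : ∀ i, δ (Xg i) = δ' (Xg i)) :
    δ = δ' :=
  funext fun a => sub_eq_zero.mp <|
    (h.sub h').eq_zero_of_map_Xg (fun i => sub_eq_zero.mpr (hX i)) a

theorem commutator (h : IsDerivation δ) (h' : IsDerivation δ') :
    IsDerivation fun a => δ (δ' a) - δ' (δ a) where
  map_add a b := by rw [h.map_add, h'.map_add, h.map_add, h'.map_add]; ring
  leibniz a b := by
    rw [h.leibniz, h'.leibniz, h.map_add, h'.map_add, h.leibniz, h.leibniz, h'.leibniz, h'.leibniz]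
    ring
  map_cC z := by rw [h.map_cC, h'.map_cC, h.map_zero, h'.map_zero, sub_zero]

theorem sum_mul {ι : Type*} (s : Finset ι) (c : ι → A m) {δ : ι → A m → A m}
    (h : ∀ k, IsDerivation (δ k)) : IsDerivation fun a => ∑ k ∈ s, c k * δ k a where
  map_add a b := by simp only [(h _).map_add, mul_add, Finset.sum_add_distrib]
  leibniz a b := by
    rw [Finset.sum_mul, Finset.mul_sum, ← Finset.sum_add_distrib]
    exact Finset.sum_congr rfl fun k _ => by rw [(h k).leibniz]; ring
  map_cC z := by simp only [(h _).map_cC, mul_zero, Finset.sum_const_zero]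

end IsDerivation

namespace AKP

variable {m : ℕ} (S : AKP m)

theorem br_add_right (a b c : A m) : S.br a (b + c) = S.br a b + S.br a c := by
  rw [S.br_antisymm, S.br_add_left, S.br_antisymm b, S.br_antisymm c]; ring

theorem isDerivation_br_right (v : A m) : IsDerivation (S.br v) where
  map_add := S.br_add_right v
  leibniz := S.br_leibniz v
  map_cC z := by rw [S.br_antisymm, S.br_const, neg_zero]

theorem isDerivation_br_left (w : A m) : IsDerivation (S.br · w) where
  map_add a b := S.br_add_left a b w
  leibniz a b := by rw [S.br_antisymm, S.br_leibniz, S.br_antisymm a, S.br_antisymm b]; ring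
  map_cC z := S.br_const z w

theorem isDerivation_D (i : Fin m) : IsDerivation (S.D · i) := by
  have hD : (S.D · i) = fun u => ∑ k, (S.γ2⁻¹ * S.P i k) * S.br u (Xg k) := by
    funext u
    rw [D, Finset.mul_sum]
    exact Finset.sum_congr rfl fun k _ => by ring
  rw [hD]
  exact IsDerivation.sum_mul _ _ fun k => S.isDerivation_br_left (Xg k)

theorem isDerivation_act (X : Fin m → A m) : IsDerivation (S.act X) :=
  IsDerivation.sum_mul _ X S.isDerivation_D

theorem act_eq_dotProduct (X : Fin m → A m) (u : A m) : S.act X u = X ⬝ᵥ S.D u := rfl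

noncomputable def ham (v : A m) : Fin m → A m := fun l => S.br v (Xg l)

noncomputable def Pmat : Matrix (Fin m) (Fin m) (A m) := Matrix.of S.P

noncomputable def Dmat : Matrix (Fin m) (Fin m) (A m) := Matrix.of fun i k => S.Dm i k

theorem Pmat_transpose : S.Pmatᵀ = -S.Pmat := by
  ext i j
  exact S.br_antisymm _ _

theorem Pmat_mul_Pmat_mul_Pmat : S.Pmat * S.Pmat * S.Pmat = -S.γ2 • S.Pmat := by
  ext i j
  simp only [Matrix.mul_apply, Finset.sum_mul, Matrix.smul_apply, smul_eq_mul]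
  rw [Finset.sum_comm]
  exact S.akp i j

theorem Dmat_eq : S.Dmat = S.γ2⁻¹ • (S.Pmat * S.Pmatᵀ) := by
  ext i k
  simp only [Dmat, Dm, D, Matrix.of_apply, Matrix.smul_apply, Matrix.mul_apply,
    Matrix.transpose_apply, smul_eq_mul]
  congr 1
  exact Finset.sum_congr rfl fun l _ => mul_comm _ _

theorem Dmat_transpose : S.Dmatᵀ = S.Dmat := by
  rw [Dmat_eq, Matrix.transpose_smul, Matrix.transpose_mul, Matrix.transpose_transpose]

theorem Dmat_mul_Pmat_transpose : S.Dmat * S.Pmatᵀ = S.Pmatᵀ := by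
  rw [Dmat_eq, Pmat_transpose, Matrix.mul_neg, Matrix.mul_neg, Matrix.smul_mul, Matrix.neg_mul,
    Pmat_mul_Pmat_mul_Pmat, neg_smul, neg_neg, smul_smul, inv_mul_cancel₀ S.γ2_ne,
    one_smul]

theorem Dmat_mulVec_ham (v : A m) : S.Dmat *ᵥ S.ham v = S.ham v := by
  funext i
  have h := IsDerivation.ext (IsDerivation.sum_mul Finset.univ (S.Dmat i)
    fun l => S.isDerivation_br_left (Xg l)) (S.isDerivation_br_left (Xg i))
    fun a => congrFun (congrFun S.Dmat_mul_Pmat_transpose i) a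
  exact congrFun h v

theorem ham_mem_tSp (v : A m) : S.ham v ∈ S.tSp := ⟨S.ham v, S.Dmat_mulVec_ham v⟩

theorem mem_tSp_of_tang {T : Fin m → A m} (h : S.tang T) : T ∈ S.tSp := by
  obtain ⟨V, hV⟩ := h
  exact ⟨V, (funext hV).symm⟩

theorem exists_eq_sum_smul_ham {X : Fin m → A m} (hX : X ∈ S.tSp) :
    ∃ c : Fin m → A m, X = ∑ l, c l • S.ham (Xg l) := by
  obtain ⟨V, rfl⟩ := hX
  refine ⟨S.γ2⁻¹ • (S.Pmat *ᵥ V), ?_⟩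
  have hP : S.Pmat * S.Pmatᵀ = S.Pmatᵀ * S.Pmat := by
    rw [Pmat_transpose, Matrix.mul_neg, Matrix.neg_mul]
  change S.Dmat *ᵥ V = _
  rw [Dmat_eq, hP, Matrix.smul_mulVec, ← Matrix.mulVec_mulVec, ← Matrix.mulVec_smul,
    Matrix.mulVec_transpose, Matrix.vecMul_eq_sum]
  rfl

theorem Dmat_mulVec_of_mem_tSp {X : Fin m → A m} (hX : X ∈ S.tSp) : S.Dmat *ᵥ X = X := by
  obtain ⟨c, rfl⟩ := S.exists_eq_sum_smul_ham hX
  simp only [Matrix.mulVec_sum, Matrix.mulVec_smul, Dmat_mulVec_ham]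

theorem act_Xg {X : Fin m → A m} (hX : X ∈ S.tSp) (a : Fin m) : S.act X (Xg a) = X a := by
  change (X ᵥ* S.Dmat) a = X a
  rw [← Matrix.mulVec_transpose, Dmat_transpose, S.Dmat_mulVec_of_mem_tSp hX]

theorem act_ham (v u : A m) : S.act (S.ham v) u = S.br v u :=
  congrFun (IsDerivation.ext (S.isDerivation_act _) (S.isDerivation_br_right v)
    (S.act_Xg (S.ham_mem_tSp v))) u

theorem lie_eq (X Y : Fin m → A m) : S.lie X Y = S.act X ∘ Y - S.act Y ∘ X := rfl

theorem lie_antisymm (X Y : Fin m → A m) : S.lie X Y = -S.lie Y X := by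
  rw [lie_eq, lie_eq, neg_sub]

theorem lie_sum_left {ι : Type*} (s : Finset ι) (X : ι → Fin m → A m) (Y : Fin m → A m) :
    S.lie (∑ l ∈ s, X l) Y = ∑ l ∈ s, S.lie (X l) Y := by
  funext i
  simp only [lie, Finset.sum_apply, (S.isDerivation_act Y).map_sum, Finset.sum_sub_distrib,
    act_eq_dotProduct, sum_dotProduct]

theorem lie_smul_left (a : A m) (X Y : Fin m → A m) :
    S.lie (a • X) Y = a • S.lie X Y - S.act Y a • X := by
  funext i
  simp only [lie, Pi.sub_apply, Pi.smul_apply, smul_eq_mul, (S.isDerivation_act Y).leibniz,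
    S.act_eq_dotProduct X, act_eq_dotProduct _ (a • X), smul_dotProduct]
  ring

theorem lie_ham_ham (u v : A m) : S.lie (S.ham u) (S.ham v) = S.ham (S.br u v) := by
  funext i
  have hJ := S.br_jacobi u v (Xg i)
  rw [S.br_antisymm (Xg i), (S.isDerivation_br_right v).map_neg, S.br_antisymm (Xg i)] at hJ
  simp only [lie, act_ham, ham]
  linear_combination hJ

theorem lie_mem_tSp_of_forall_lie_ham_mem {X Y : Fin m → A m} (hX : X ∈ S.tSp)
    (h : ∀ l, S.lie (S.ham (Xg l)) Y ∈ S.tSp) : S.lie X Y ∈ S.tSp := by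
  obtain ⟨c, rfl⟩ := S.exists_eq_sum_smul_ham hX
  rw [lie_sum_left]
  refine Submodule.sum_mem _ fun l _ => ?_
  rw [lie_smul_left]
  exact sub_mem (Submodule.smul_mem _ _ (h l)) (Submodule.smul_mem _ _ (S.ham_mem_tSp _))

theorem lie_mem_tSp {X Y : Fin m → A m} (hX : X ∈ S.tSp) (hY : Y ∈ S.tSp) :
    S.lie X Y ∈ S.tSp := by
  refine S.lie_mem_tSp_of_forall_lie_ham_mem hX fun l => ?_
  rw [lie_antisymm]
  refine neg_mem (S.lie_mem_tSp_of_forall_lie_ham_mem hY fun n => ?_)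
  rw [lie_ham_ham]
  exact S.ham_mem_tSp _

theorem act_lie {X Y : Fin m → A m} (hX : X ∈ S.tSp) (hY : Y ∈ S.tSp) :
    S.act (S.lie X Y) = fun u => S.act X (S.act Y u) - S.act Y (S.act X u) := by
  refine IsDerivation.ext (S.isDerivation_act _)
    ((S.isDerivation_act X).commutator (S.isDerivation_act Y)) fun a => ?_
  rw [S.act_Xg (S.lie_mem_tSp hX hY), S.act_Xg hX, S.act_Xg hY]
  rfl

theorem nab_eq (X Y : Fin m → A m) : S.nab X Y = S.Dmat *ᵥ (S.act X ∘ Y) := rfl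

theorem nab_mem_tSp (X Y : Fin m → A m) : S.nab X Y ∈ S.tSp := ⟨_, (S.nab_eq X Y).symm⟩

theorem nab_neg_left (X Y : Fin m → A m) : S.nab (-X) Y = -S.nab X Y := by
  have h : S.act (-X) ∘ Y = -(S.act X ∘ Y) := funext fun k => neg_dotProduct _ _
  rw [nab_eq, nab_eq, h, Matrix.mulVec_neg]

theorem nab_sub_right (X Y W : Fin m → A m) : S.nab X (Y - W) = S.nab X Y - S.nab X W := by
  have h : S.act X ∘ (Y - W) = S.act X ∘ Y - S.act X ∘ W :=
    funext fun k => (S.isDerivation_act X).map_sub _ _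
  rw [nab_eq, nab_eq, nab_eq, h, Matrix.mulVec_sub]

theorem nab_sub_nab {X Y : Fin m → A m} (hX : X ∈ S.tSp) (hY : Y ∈ S.tSp) :
    S.nab X Y - S.nab Y X = S.lie X Y := by
  rw [nab_eq, nab_eq, ← Matrix.mulVec_sub, ← lie_eq,
    S.Dmat_mulVec_of_mem_tSp (S.lie_mem_tSp hX hY)]

theorem Dmat_mulVec_dotProduct (g : Fin m → A m) {W : Fin m → A m} (hW : W ∈ S.tSp) :
    S.Dmat *ᵥ g ⬝ᵥ W = g ⬝ᵥ W := by
  rw [dotProduct_comm, dotProduct_mulVec, ← Matrix.mulVec_transpose, Dmat_transpose,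
    S.Dmat_mulVec_of_mem_tSp hW, dotProduct_comm]

theorem act_dotProduct (X : Fin m → A m) {Y W : Fin m → A m} (hY : Y ∈ S.tSp) (hW : W ∈ S.tSp) :
    S.act X (Y ⬝ᵥ W) = S.nab X Y ⬝ᵥ W + Y ⬝ᵥ S.nab X W := by
  rw [nab_eq, nab_eq, S.Dmat_mulVec_dotProduct _ hW, dotProduct_comm Y (S.Dmat *ᵥ _),
    S.Dmat_mulVec_dotProduct _ hY, dotProduct, (S.isDerivation_act X).map_sum,
    dotProduct, dotProduct, ← Finset.sum_add_distrib]
  exact Finset.sum_congr rfl fun i _ => by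
    rw [(S.isDerivation_act X).leibniz, Function.comp_apply, Function.comp_apply]; ring

theorem curv_eq (X Y Z : Fin m → A m) :
    S.curv X Y Z = S.nab X (S.nab Y Z) - S.nab Y (S.nab X Z) - S.nab (S.lie X Y) Z := rfl

theorem curv_antisymm (X Y Z : Fin m → A m) : S.curv X Y Z = -S.curv Y X Z := by
  rw [curv_eq, curv_eq, lie_antisymm, nab_neg_left]
  abel

theorem act_act_dotProduct (Z V : Fin m → A m) {X Y : Fin m → A m} (hX : X ∈ S.tSp)
    (hY : Y ∈ S.tSp) : S.act Z (S.act V (X ⬝ᵥ Y)) = S.nab Z (S.nab V X) ⬝ᵥ Y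
      + S.nab V X ⬝ᵥ S.nab Z Y + S.nab Z X ⬝ᵥ S.nab V Y + X ⬝ᵥ S.nab Z (S.nab V Y) := by
  rw [S.act_dotProduct V hX hY, (S.isDerivation_act Z).map_add,
    S.act_dotProduct Z (S.nab_mem_tSp V X) hY, S.act_dotProduct Z hX (S.nab_mem_tSp V Y)]
  ring

theorem curv_dotProduct_add_dotProduct_curv {X Y Z V : Fin m → A m} (hX : X ∈ S.tSp)
    (hY : Y ∈ S.tSp) (hZ : Z ∈ S.tSp) (hV : V ∈ S.tSp) :
    S.curv Z V X ⬝ᵥ Y + X ⬝ᵥ S.curv Z V Y = 0 := by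
  have hcomm := congrFun (S.act_lie hZ hV) (X ⬝ᵥ Y)
  rw [S.act_dotProduct _ hX hY, S.act_act_dotProduct Z V hX hY, S.act_act_dotProduct V Z hX hY]
    at hcomm
  rw [curv_eq, curv_eq, sub_dotProduct, sub_dotProduct, dotProduct_sub, dotProduct_sub]
  linear_combination -hcomm

theorem lie_cyclic {X Y Z : Fin m → A m} (hX : X ∈ S.tSp) (hY : Y ∈ S.tSp) (hZ : Z ∈ S.tSp) :
    S.lie X (S.lie Y Z) + S.lie Y (S.lie Z X) + S.lie Z (S.lie X Y) = 0 := by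
  funext i
  simp only [Pi.add_apply, Pi.zero_apply, lie, S.act_lie hX hY, S.act_lie hY hZ, S.act_lie hZ hX,
    (S.isDerivation_act _).map_sub]
  ring

theorem nab_nab_sub_nab_nab (W : Fin m → A m) {X Y : Fin m → A m} (hX : X ∈ S.tSp)
    (hY : Y ∈ S.tSp) : S.nab W (S.nab X Y) - S.nab W (S.nab Y X) = S.nab W (S.lie X Y) := by
  rw [← nab_sub_right, S.nab_sub_nab hX hY]

theorem curv_cyclic {X Y Z : Fin m → A m} (hX : X ∈ S.tSp) (hY : Y ∈ S.tSp) (hZ : Z ∈ S.tSp) :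
    S.curv X Y Z + S.curv Y Z X + S.curv Z X Y = 0 := by
  have swapX := S.nab_nab_sub_nab_nab X hY hZ
  have swapY := S.nab_nab_sub_nab_nab Y hZ hX
  have swapZ := S.nab_nab_sub_nab_nab Z hX hY
  have torsionX := S.nab_sub_nab hX (S.lie_mem_tSp hY hZ)
  have torsionY := S.nab_sub_nab hY (S.lie_mem_tSp hZ hX)
  have torsionZ := S.nab_sub_nab hZ (S.lie_mem_tSp hX hY)
  rw [curv_eq, curv_eq, curv_eq]
  linear_combination swapX + swapY + swapZ + torsionX + torsionY + torsionZ
    + S.lie_cyclic hX hY hZ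

theorem Rq_eq (X Y Z V : Fin m → A m) : S.Rq X Y Z V = S.curv Z V Y ⬝ᵥ X := rfl

theorem Rq_antisymm_right (X Y Z V : Fin m → A m) : S.Rq X Y Z V = -S.Rq X Y V Z := by
  rw [Rq_eq, Rq_eq, curv_antisymm, neg_dotProduct]

theorem Rq_antisymm_left {X Y Z V : Fin m → A m} (hX : X ∈ S.tSp) (hY : Y ∈ S.tSp)
    (hZ : Z ∈ S.tSp) (hV : V ∈ S.tSp) : S.Rq X Y Z V = -S.Rq Y X Z V := by
  rw [Rq_eq, Rq_eq, dotProduct_comm (S.curv Z V Y)]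
  linear_combination S.curv_dotProduct_add_dotProduct_curv hX hY hZ hV

theorem Rq_cyclic (X : Fin m → A m) {Y Z V : Fin m → A m} (hY : Y ∈ S.tSp) (hZ : Z ∈ S.tSp)
    (hV : V ∈ S.tSp) : S.Rq X Y Z V + S.Rq X Z V Y + S.Rq X V Y Z = 0 := by
  rw [Rq_eq, Rq_eq, Rq_eq, ← add_dotProduct, ← add_dotProduct, S.curv_cyclic hZ hV hY,
    zero_dotProduct]

-- The four cyclic identities, normalised by the two antisymmetries.
theorem Rq_pair_symm {X Y Z V : Fin m → A m} (hX : X ∈ S.tSp) (hY : Y ∈ S.tSp)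
    (hZ : Z ∈ S.tSp) (hV : V ∈ S.tSp) : S.Rq X Y Z V = S.Rq Z V X Y := by
  linear_combination (2⁻¹ : A m) * (S.Rq_antisymm_right X Y Z V + S.Rq_cyclic X hY hZ hV
    - S.Rq_antisymm_left hX hY hV hZ + S.Rq_antisymm_left hX hZ hY hV
    - S.Rq_antisymm_right X Z Y V - S.Rq_antisymm_left hX hV hY hZ + S.Rq_cyclic Y hX hV hZ
    - S.Rq_antisymm_right Y Z X V + S.Rq_antisymm_left hY hZ hV hX
    - S.Rq_antisymm_left hY hV hZ hX - S.Rq_cyclic Z hX hY hV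
    - S.Rq_antisymm_left hZ hV hX hY + S.Rq_cyclic V hX hY hZ)

end AKP
end KPA

/-- The symmetries of the curvature tensor of an almost
Kähler–Poisson algebra: `R(X,Y,Z,V) = −R(X,Y,V,Z) = −R(Y,X,Z,V)` and
`R(X,Y,Z,V) = R(Z,V,X,Y)`, where `R(X,Y,Z,V) = (R(Z,V)Y, X)`. -/
theorem statement_16 {m : ℕ} (S : KPA.AKP m) (X Y Z V : Fin m → KPA.A m)
    (hX : S.tang X) (hY : S.tang Y) (hZ : S.tang Z) (hV : S.tang V) :
    S.Rq X Y Z V = - S.Rq X Y V Z ∧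
    S.Rq X Y Z V = - S.Rq Y X Z V ∧
    S.Rq X Y Z V = S.Rq Z V X Y := by
  replace hX := S.mem_tSp_of_tang hX
  replace hY := S.mem_tSp_of_tang hY
  replace hZ := S.mem_tSp_of_tang hZ
  replace hV := S.mem_tSp_of_tang hV
  exact ⟨S.Rq_antisymm_right X Y Z V, S.Rq_antisymm_left hX hY hZ hV,
    S.Rq_pair_symm hX hY hZ hV⟩
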